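/- arXiv:1304.5194 — 4 statements merged into one kernel-verified Lean document; each statement's English description precedes it below -/
import Mathlib

section
/- Let α: Z_p^h → Z/p^k be a homomorphism with α(b_j) = i_j for the standard basis elements b_j. Then the Pontryagin dual of T(α) = (Z/p^k) ⊕_{Z_p^h} Q_p^h is isomorphic as a Z_p-module to the quotient of the free Z_p-module on generators b_1,...,b_h, x by the single relation p^k·x = i_1·b_1 + ... + i_h·b_h. -/
open scoped Classical

namespace TwistedChar

variable (p : ℕ) [Fact p.Prime]

/-- The inclusion `ℤ_p^h → ℚ_p^h`. -/
noncomputable def incl (h : ℕ) : (Fin h → ℤ_[p]) →+ (Fin h → ℚ_[p]) :=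
  AddMonoidHom.mk' (fun t j => (t j : ℚ_[p])) (by
    intro a b; funext j; push_cast; simp)

/-- `ℤ_p` as an additive subgroup of `ℚ_p`. -/
noncomputable def zSub : AddSubgroup ℚ_[p] :=
  (PadicInt.Coe.ringHom (p := p)).toAddMonoidHom.range

/-- The quotient group `ℚ_p/ℤ_p`. -/
noncomputable abbrev QZ := ℚ_[p] ⧸ zSub p

/-- The quotient map `ℚ_p^h → (ℚ_p/ℤ_p)^h`. -/
noncomputable def qmap (h : ℕ) : (Fin h → ℚ_[p]) →+ (Fin h → QZ p) :=
  AddMonoidHom.mk' (fun t j => QuotientAddGroup.mk (t j)) (by intro a b; funext j; rfl)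

lemma qmap_incl (h : ℕ) (i : Fin h → ℤ_[p]) : qmap p h (incl p h i) = 0 := by
  funext j
  show QuotientAddGroup.mk _ = (0 : QZ p)
  rw [QuotientAddGroup.eq_zero_iff]
  exact ⟨i j, rfl⟩

variable {h : ℕ} {A : Type*} [AddCommGroup A]

/-- The subgroup of `A × ℚ_p^h` that one kills to form the pushout `A ⊕_{ℤ_p^h} ℚ_p^h`. -/
noncomputable def pushSub (α : (Fin h → ℤ_[p]) →+ A) :
    AddSubgroup (A × (Fin h → ℚ_[p])) :=
  (α.prod (-(incl p h))).range

/-- The pushout `A ⊕_{ℤ_p^h} ℚ_p^h` of abelian groups. -/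
noncomputable def TA (α : (Fin h → ℤ_[p]) →+ A) : Type _ :=
  (A × (Fin h → ℚ_[p])) ⧸ pushSub p α

noncomputable instance (α : (Fin h → ℤ_[p]) →+ A) : AddCommGroup (TA p α) :=
  QuotientAddGroup.Quotient.addCommGroup _

/-- The canonical surjection onto the pushout. -/
noncomputable def mkT (α : (Fin h → ℤ_[p]) →+ A) : (A × (Fin h → ℚ_[p])) →+ TA p α :=
  QuotientAddGroup.mk' _

lemma mkT_rel (α : (Fin h → ℤ_[p]) →+ A) (g : A) (t : Fin h → ℚ_[p]) (i : Fin h → ℤ_[p]) :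
    mkT p α (g, t + incl p h i) = mkT p α (g + α i, t) := by
  rw [eq_comm]
  show QuotientAddGroup.mk' _ _ = QuotientAddGroup.mk' _ _
  rw [QuotientAddGroup.mk'_eq_mk']
  refine ⟨⟨-α i, incl p h i⟩, ⟨-i, by simp⟩, ?_⟩
  ext x <;> simp <;> abel

/-- The quotient map `T(α) → (ℚ_p/ℤ_p)^h`. -/
noncomputable def cmap (α : (Fin h → ℤ_[p]) →+ A) : TA p α →+ (Fin h → QZ p) :=
  QuotientAddGroup.lift _ ((qmap p h).comp (AddMonoidHom.snd _ _)) (by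
    rintro ⟨a, t⟩ ⟨i, hi⟩
    have h2 : t = -(incl p h i) := congrArg Prod.snd hi.symm
    rw [AddMonoidHom.mem_ker]
    show qmap p h t = 0
    rw [h2, map_neg, qmap_incl, neg_zero])

@[simp] lemma cmap_mkT (α : (Fin h → ℤ_[p]) →+ A) (x : A × (Fin h → ℚ_[p])) :
    cmap p α (mkT p α x) = qmap p h x.2 := rfl


/-- `ℤ_p` as a `ℤ_p`-submodule of `ℚ_p`. -/
noncomputable def zSubM (p : ℕ) [Fact p.Prime] : Submodule ℤ_[p] ℚ_[p] :=
  LinearMap.range (Algebra.linearMap ℤ_[p] ℚ_[p])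

/-- The quotient `ℚ_p/ℤ_p` as a `ℤ_p`-module. -/
noncomputable abbrev QZM (p : ℕ) [Fact p.Prime] := ℚ_[p] ⧸ zSubM p

/-- The quotient map `ℚ_p → ℚ_p/ℤ_p`. -/
noncomputable def qmapM (p : ℕ) [Fact p.Prime] : ℚ_[p] →+ QZM p :=
  (zSubM p).mkQ.toAddMonoidHom


section Presentation

variable (p : ℕ) [Fact p.Prime]

/-- The quotient map `ℚ_p → ℚ_p/ℤ_p` as a linear map. -/
noncomputable def qm : ℚ_[p] →ₗ[ℤ_[p]] QZM p := (zSubM p).mkQ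

lemma qm_zero_iff (q : ℚ_[p]) : qm p q = 0 ↔ ∃ z : ℤ_[p], (z : ℚ_[p]) = q := by
  rw [qm, Submodule.mkQ_apply, Submodule.Quotient.mk_eq_zero]
  exact ⟨fun ⟨z, hz⟩ => ⟨z, hz⟩, fun ⟨z, hz⟩ => ⟨z, hz⟩⟩

lemma qm_coe (z : ℤ_[p]) : qm p (z : ℚ_[p]) = 0 :=
  (qm_zero_iff p _).mpr ⟨z, rfl⟩

lemma qm_surjective : Function.Surjective (qm p) :=
  Submodule.mkQ_surjective _

/-- `p^{-n}` in `ℚ_p`. -/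
noncomputable def ek (n : ℕ) : ℚ_[p] := ((p : ℚ_[p]) ^ n)⁻¹

lemma pQ_ne_zero : (p : ℚ_[p]) ≠ 0 :=
  Nat.cast_ne_zero.mpr (Fact.out : p.Prime).ne_zero

lemma pQ_pow_ne_zero (n : ℕ) : (p : ℚ_[p]) ^ n ≠ 0 :=
  pow_ne_zero _ (pQ_ne_zero p)

lemma pow_mul_ek (n : ℕ) : (p : ℚ_[p]) ^ n * ek p n = 1 :=
  mul_inv_cancel₀ (pQ_pow_ne_zero p n)

lemma nsmul_ek (n : ℕ) : (p ^ n : ℕ) • ek p n = 1 := by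
  rw [nsmul_eq_mul]; push_cast; exact pow_mul_ek p n

/-- Divisibility from a quotient computation. -/
lemma dvd_of_coe_eq (n : ℕ) (z w : ℤ_[p]) (hw : (w : ℚ_[p]) = (z : ℚ_[p]) * ek p n) :
    (p : ℤ_[p]) ^ n ∣ z := by
  refine ⟨w, ?_⟩
  have h1 : (((p : ℤ_[p]) ^ n * w : ℤ_[p]) : ℚ_[p]) = ((z : ℤ_[p]) : ℚ_[p]) := by
    push_cast
    rw [hw, ek]
    rw [mul_comm ((z : ℚ_[p])) _, ← mul_assoc, mul_inv_cancel₀ (pQ_pow_ne_zero p n), one_mul]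
  exact (Subtype.coe_injective h1).symm

lemma sub_val_dvd (n : ℕ) (y : ℤ_[p]) :
    ∃ d : ℤ_[p], y = (((PadicInt.toZModPow n y).val : ℕ) : ℤ_[p]) + (p : ℤ_[p]) ^ n * d := by
  haveI : NeZero (p ^ n) := ⟨pow_ne_zero _ (Fact.out : p.Prime).ne_zero⟩
  have hker : y - (((PadicInt.toZModPow n y).val : ℕ) : ℤ_[p]) ∈
      RingHom.ker (PadicInt.toZModPow (p := p) n) := by
    rw [RingHom.mem_ker, map_sub, map_natCast, ZMod.natCast_rightInverse _, sub_self]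
  rw [PadicInt.ker_toZModPow, Ideal.mem_span_singleton] at hker
  obtain ⟨d, hd⟩ := hker
  exact ⟨d, by rw [← hd]; ring⟩

/-- Congruence for the quotient map. -/
lemma qm_mul_ek_congr (n : ℕ) (y z : ℤ_[p]) :
    qm p ((y : ℚ_[p]) * (z : ℚ_[p]) * ek p n) =
      qm p ((((PadicInt.toZModPow n y).val : ℕ) : ℚ_[p]) * (z : ℚ_[p]) * ek p n) := by
  obtain ⟨d, hd⟩ := sub_val_dvd p n y
  have key : (y : ℚ_[p]) * (z : ℚ_[p]) * ek p n =
      (((PadicInt.toZModPow n y).val : ℕ) : ℚ_[p]) * (z : ℚ_[p]) * ek p n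
        + ((d * z : ℤ_[p]) : ℚ_[p]) := by
    have hy : (y : ℚ_[p]) = (((PadicInt.toZModPow n y).val : ℕ) : ℚ_[p])
        + (p : ℚ_[p]) ^ n * (d : ℚ_[p]) := by exact_mod_cast congrArg _ hd
    rw [hy, ek]
    push_cast
    linear_combination ((d : ℚ_[p]) * (z : ℚ_[p])) * (mul_inv_cancel₀ (pQ_pow_ne_zero p n))
  rw [key, map_add, qm_coe, add_zero]

/-- The rigidity lemma: an additive map `ℚ_p → ℚ_p/ℤ_p` vanishing on `ℤ_p` is
multiplication by a `p`-adic integer. -/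
lemma rigid (ψ : ℚ_[p] →+ QZM p) (hψ : ∀ z : ℤ_[p], ψ (z : ℚ_[p]) = 0) :
    ∃ b : ℤ_[p], ∀ s : ℚ_[p], ψ s = qm p (s * (b : ℚ_[p])) := by
  have hpR : (1 : ℝ) < (p : ℝ) := by exact_mod_cast (Fact.out : p.Prime).one_lt
  -- Step 1: lift the values at `p^{-n}`.
  have hstep : ∀ n : ℕ, ∃ u : ℤ_[p], ψ (ek p n) = qm p ((u : ℚ_[p]) * ek p n) := by
    intro n
    obtain ⟨q, hq⟩ := qm_surjective p (ψ (ek p n))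
    have h1 : (p ^ n : ℕ) • ψ (ek p n) = 0 := by
      rw [← map_nsmul, nsmul_ek]
      have h2 : (1 : ℚ_[p]) = ((1 : ℤ_[p]) : ℚ_[p]) := by push_cast; ring
      rw [h2, hψ]
    have h2 : qm p ((p ^ n : ℕ) • q) = 0 := by rw [map_nsmul, hq]; exact h1
    rw [qm_zero_iff] at h2
    obtain ⟨w, hw⟩ := h2
    refine ⟨w, ?_⟩
    rw [← hq]
    congr 1
    rw [nsmul_eq_mul] at hw
    push_cast at hw
    rw [ek, hw, mul_comm ((p : ℚ_[p]) ^ n) q, mul_assoc,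
      mul_inv_cancel₀ (pQ_pow_ne_zero p n), mul_one]
  choose u hu using hstep
  -- Step 2: coherence of the lifts.
  have hcoh : ∀ n : ℕ, (p : ℤ_[p]) ^ n ∣ (u (n + 1) - u n) := by
    intro n
    have e1 : (p : ℕ) • ψ (ek p (n + 1)) = ψ (ek p n) := by
      rw [← map_nsmul]
      congr 1
      rw [nsmul_eq_mul, ek, ek, pow_succ, mul_inv, mul_comm ((p : ℚ_[p]) ^ n)⁻¹ _,
        ← mul_assoc, mul_inv_cancel₀ (pQ_ne_zero p), one_mul]
    rw [hu, hu, ← map_nsmul] at e1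
    have e3 : (p : ℕ) • ((u (n + 1) : ℚ_[p]) * ek p (n + 1)) = (u (n + 1) : ℚ_[p]) * ek p n := by
      rw [nsmul_eq_mul, ek, ek, pow_succ, mul_inv]
      linear_combination ((u (n + 1) : ℚ_[p]) * ((p : ℚ_[p]) ^ n)⁻¹)
        * (mul_inv_cancel₀ (pQ_ne_zero p))
    rw [e3] at e1
    have e2 : qm p (((u (n + 1) - u n : ℤ_[p]) : ℚ_[p]) * ek p n) = 0 := by
      have e4 : ((u (n + 1) - u n : ℤ_[p]) : ℚ_[p]) * ek p n
          = ((u (n + 1) : ℚ_[p]) * ek p n) - ((u n : ℚ_[p]) * ek p n) := by push_cast; ring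
      rw [e4, map_sub, e1, sub_self]
    rw [qm_zero_iff] at e2
    obtain ⟨z, hz⟩ := e2
    exact dvd_of_coe_eq p n _ z hz
  have hcoh2 : ∀ m n : ℕ, n ≤ m → (p : ℤ_[p]) ^ n ∣ (u m - u n) := by
    intro m n hnm
    induction m, hnm using Nat.le_induction with
    | base => simp
    | succ m hnm ih =>
      have : u (m + 1) - u n = (u (m + 1) - u m) + (u m - u n) := by ring
      rw [this]
      exact dvd_add (dvd_trans (pow_dvd_pow _ hnm) (hcoh m)) ih
  have hnorm : ∀ m n : ℕ, n ≤ m → ‖u m - u n‖ ≤ (p : ℝ) ^ (-(n : ℤ)) := by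
    intro m n hnm
    rw [PadicInt.norm_le_pow_iff_mem_span_pow, Ideal.mem_span_singleton]
    exact hcoh2 m n hnm
  -- Step 3: pass to the limit.
  have hcauchy : CauchySeq u := by
    refine cauchySeq_of_le_tendsto_0 (fun N => (p : ℝ) ^ (-(N : ℤ))) ?_ ?_
    · intro n m N hNn hNm
      rw [dist_eq_norm, PadicInt.norm_le_pow_iff_mem_span_pow, Ideal.mem_span_singleton]
      have hd : u n - u m = (u n - u N) - (u m - u N) := by ring
      rw [hd]
      exact dvd_sub (hcoh2 n N hNn) (hcoh2 m N hNm)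
    · have : (fun N : ℕ => (p : ℝ) ^ (-(N : ℤ))) = fun N : ℕ => ((p : ℝ)⁻¹) ^ N := by
        funext N
        rw [zpow_neg, ← inv_zpow, zpow_natCast]
      rw [this]
      exact tendsto_pow_atTop_nhds_zero_of_lt_one (by positivity)
        (inv_lt_one_of_one_lt₀ hpR)
  obtain ⟨b, hb⟩ := cauchySeq_tendsto_of_complete hcauchy
  have hlim : ∀ n : ℕ, (p : ℤ_[p]) ^ n ∣ (b - u n) := by
    intro n
    rw [← Ideal.mem_span_singleton, ← PadicInt.norm_le_pow_iff_mem_span_pow]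
    have ht : Filter.Tendsto (fun m => ‖u m - u n‖) Filter.atTop (nhds ‖b - u n‖) :=
      ((hb.sub tendsto_const_nhds).norm)
    refine le_of_tendsto ht ?_
    filter_upwards [Filter.eventually_ge_atTop n] with m hm
    exact hnorm m n hm
  -- Step 4: the formula.
  refine ⟨b, fun s => ?_⟩
  obtain ⟨n, hn⟩ : ∃ n : ℕ, ‖(p : ℚ_[p]) ^ n * s‖ ≤ 1 := by
    obtain ⟨n, hsn⟩ := pow_unbounded_of_one_lt ‖s‖ hpR
    refine ⟨n, ?_⟩
    rw [norm_mul, norm_pow, Padic.norm_p, inv_pow,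
      inv_mul_le_iff₀ (by positivity), mul_one]
    exact le_trans hsn.le le_rfl
  obtain ⟨z, hz⟩ : ∃ z : ℤ_[p], (z : ℚ_[p]) = (p : ℚ_[p]) ^ n * s := ⟨⟨_, hn⟩, rfl⟩
  have hs : s = (z : ℚ_[p]) * ek p n := by
    rw [hz, ek, mul_comm ((p : ℚ_[p]) ^ n) s, mul_assoc,
      mul_inv_cancel₀ (pQ_pow_ne_zero p n), mul_one]
  obtain ⟨d, hd⟩ := sub_val_dvd p n z
  set m : ℕ := (PadicInt.toZModPow n z).val with hmdef
  have hdQ : (z : ℚ_[p]) = (m : ℚ_[p]) + (p : ℚ_[p]) ^ n * (d : ℚ_[p]) := by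
    exact_mod_cast congrArg _ hd
  have hsplit : s = (m : ℕ) • ek p n + ((d : ℤ_[p]) : ℚ_[p]) := by
    rw [hs, hdQ, nsmul_eq_mul, ek]
    push_cast
    linear_combination (d : ℚ_[p]) * (mul_inv_cancel₀ (pQ_pow_ne_zero p n))
  have e5 : ψ s = qm p ((m : ℚ_[p]) * ((u n : ℚ_[p]) * ek p n)) := by
    rw [hsplit, map_add, hψ d, add_zero, map_nsmul, hu, ← map_nsmul, nsmul_eq_mul]
  rw [e5]
  -- compare with `qm p (s * b)`
  obtain ⟨c, hc⟩ := hlim n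
  have e6 : s * (b : ℚ_[p]) - (m : ℚ_[p]) * ((u n : ℚ_[p]) * ek p n)
      = ((z * c + d * u n : ℤ_[p]) : ℚ_[p]) := by
    have hbQ : (b : ℚ_[p]) = (u n : ℚ_[p]) + (p : ℚ_[p]) ^ n * (c : ℚ_[p]) := by
      have hb2 : b = u n + (p : ℤ_[p]) ^ n * c := by rw [← hc]; ring
      exact_mod_cast congrArg _ hb2
    push_cast
    rw [hs, hbQ, hdQ, ek]
    linear_combination ((m : ℚ_[p]) * (c : ℚ_[p]) + (d : ℚ_[p]) * ((u n : ℚ_[p]))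
      + (p : ℚ_[p]) ^ n * (d : ℚ_[p]) * (c : ℚ_[p])) * (mul_inv_cancel₀ (pQ_pow_ne_zero p n))
  have e7 : qm p (s * (b : ℚ_[p])) - qm p ((m : ℚ_[p]) * ((u n : ℚ_[p]) * ek p n)) = 0 := by
    rw [← map_sub, e6, qm_coe]
  rw [eq_comm, ← sub_eq_zero]
  exact e7

variable {h : ℕ} (k : ℕ)

/-- The additive map `ℤ → ℚ_p/ℤ_p`, `m ↦ m·x/p^k`. -/
noncomputable def chiInt (x : ℤ_[p]) : ℤ →+ QZM p :=
  AddMonoidHom.mk' (fun m => qm p ((m : ℚ_[p]) * (x : ℚ_[p]) * ek p k)) (by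
    intro a b
    push_cast
    rw [add_mul, add_mul, map_add])

lemma chiInt_pk (x : ℤ_[p]) : chiInt p k x ((p ^ k : ℕ) : ℤ) = 0 := by
  show qm p ((((p ^ k : ℕ) : ℤ) : ℚ_[p]) * (x : ℚ_[p]) * ek p k) = 0
  have e1 : ((((p ^ k : ℕ) : ℤ) : ℚ_[p]) * (x : ℚ_[p]) * ek p k) = (x : ℚ_[p]) := by
    push_cast
    rw [mul_comm ((p : ℚ_[p]) ^ k) ((x : ℚ_[p])), mul_assoc, pow_mul_ek, mul_one]
  rw [e1, qm_coe]

/-- The character `ℤ/p^k → ℚ_p/ℤ_p` sending `1` to `x/p^k`. -/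
noncomputable def chi (x : ℤ_[p]) : ZMod (p ^ k) →+ QZM p :=
  ZMod.lift (p ^ k) ⟨chiInt p k x, chiInt_pk p k x⟩

lemma chi_toZModPow (x y : ℤ_[p]) :
    chi p k x (PadicInt.toZModPow k y) = qm p ((y : ℚ_[p]) * (x : ℚ_[p]) * ek p k) := by
  haveI : NeZero (p ^ k) := ⟨pow_ne_zero _ (Fact.out : p.Prime).ne_zero⟩
  have e1 : PadicInt.toZModPow k y = ((((PadicInt.toZModPow k y).val : ℕ) : ℤ) : ZMod (p ^ k)) := by
    push_cast
    rw [ZMod.natCast_rightInverse _]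
  rw [e1, chi, ZMod.lift_coe]
  show qm p (((((PadicInt.toZModPow k y).val : ℕ) : ℤ) : ℚ_[p]) * (x : ℚ_[p]) * ek p k) = _
  rw [qm_mul_ek_congr p k y x]
  norm_cast

variable (α : (Fin h → ℤ_[p]) →+ ZMod (p ^ k)) (I : Fin h → ℤ_[p])

/-- Computation of `α` from its values on the standard basis vectors. -/
lemma alpha_apply (hI : ∀ j, PadicInt.toZModPow k (I j) = α (Pi.single j 1))
    (i : Fin h → ℤ_[p]) :
    α i = ∑ j, PadicInt.toZModPow k (i j * I j) := by
  haveI : NeZero (p ^ k) := ⟨pow_ne_zero _ (Fact.out : p.Prime).ne_zero⟩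
  have e0 : i = ∑ j, Pi.single j (i j) := (Finset.univ_sum_single i).symm
  conv_lhs => rw [e0, map_sum]
  refine Finset.sum_congr rfl fun j _ => ?_
  obtain ⟨d, hd⟩ := sub_val_dvd p k (i j)
  set m : ℕ := (PadicInt.toZModPow k (i j)).val with hm
  have e1 : (Pi.single j (i j) : Fin h → ℤ_[p])
      = m • Pi.single j (1 : ℤ_[p]) + (p ^ k : ℕ) • Pi.single j d := by
    rw [← Pi.single_smul, ← Pi.single_smul, ← Pi.single_add]
    congr 1
    rw [hd]
    push_cast
    rw [nsmul_eq_mul, nsmul_eq_mul, mul_one]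
    push_cast
    ring
  rw [e1, map_add, map_nsmul, map_nsmul, ← hI j]
  have e2 : (p ^ k : ℕ) • α (Pi.single j d) = 0 := by
    rw [nsmul_eq_mul, ZMod.natCast_self, zero_mul]
  rw [e2, add_zero]
  have e3 : m • PadicInt.toZModPow k (I j) = PadicInt.toZModPow k ((m : ℤ_[p]) * I j) := by
    rw [map_mul, map_natCast, nsmul_eq_mul]
  rw [e3]
  have e4 : PadicInt.toZModPow k ((i j : ℤ_[p]) - (m : ℤ_[p])) = 0 := by
    rw [map_sub, map_natCast, hm, ZMod.natCast_rightInverse _, sub_self]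
  have e5 : PadicInt.toZModPow k ((m : ℤ_[p]) * I j) - PadicInt.toZModPow k (i j * I j)
      = PadicInt.toZModPow k (((m : ℤ_[p]) - i j) * I j) := by
    rw [sub_mul, map_sub]
  have e6 : PadicInt.toZModPow k (((m : ℤ_[p]) - i j) * I j) = 0 := by
    rw [map_mul]
    have : PadicInt.toZModPow k ((m : ℤ_[p]) - i j) = 0 := by
      rw [← neg_sub, map_neg, e4, neg_zero]
    rw [this, zero_mul]
  have := e5.trans e6
  rw [sub_eq_zero] at this
  exact this

/-- The coefficient attached to the `j`-th coordinate. -/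
noncomputable def cfun (b : Fin h → ℤ_[p]) (x : ℤ_[p]) (j : Fin h) : ℚ_[p] :=
  (b j : ℚ_[p]) + (I j : ℚ_[p]) * (x : ℚ_[p]) * ek p k

/-- The raw character on `ℤ/p^k × ℚ_p^h`. -/
noncomputable def bigF (b : Fin h → ℤ_[p]) (x : ℤ_[p]) :
    (ZMod (p ^ k) × (Fin h → ℚ_[p])) →+ QZM p :=
  AddMonoidHom.mk' (fun gt => chi p k x gt.1 + ∑ j, qm p (gt.2 j * cfun p k I b x j)) (by
    intro a c
    rw [Prod.fst_add, Prod.snd_add, map_add]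
    have e1 : ∀ j, qm p ((a.2 + c.2) j * cfun p k I b x j)
        = qm p (a.2 j * cfun p k I b x j) + qm p (c.2 j * cfun p k I b x j) := by
      intro j
      rw [Pi.add_apply, add_mul, map_add]
    rw [Finset.sum_congr rfl fun j _ => e1 j, Finset.sum_add_distrib]
    abel)

lemma bigF_vanish (hI : ∀ j, PadicInt.toZModPow k (I j) = α (Pi.single j 1))
    (b : Fin h → ℤ_[p]) (x : ℤ_[p]) :
    ∀ y ∈ pushSub p α, y ∈ (bigF p k I b x).ker := by
  rintro y ⟨i, rfl⟩
  rw [AddMonoidHom.mem_ker]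
  show chi p k x ((α.prod (-incl p h) i).1) + _ = 0
  have e1 : (α.prod (-incl p h)) i = (α i, -(incl p h i)) := rfl
  rw [e1]
  show chi p k x (α i) + ∑ j, qm p ((-(incl p h i)) j * cfun p k I b x j) = 0
  rw [alpha_apply p k α I hI i, map_sum]
  have e2 : ∀ j, chi p k x (PadicInt.toZModPow k (i j * I j))
      = qm p (((i j * I j : ℤ_[p]) : ℚ_[p]) * (x : ℚ_[p]) * ek p k) := fun j =>
    chi_toZModPow p k x _
  rw [Finset.sum_congr rfl fun j _ => e2 j]
  have e3 : ∀ j, qm p ((-(incl p h i)) j * cfun p k I b x j)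
      = qm p ((-(i j * b j : ℤ_[p]) : ℤ_[p]) : ℚ_[p])
        - qm p (((i j * I j : ℤ_[p]) : ℚ_[p]) * (x : ℚ_[p]) * ek p k) := by
    intro j
    rw [← map_sub]
    congr 1
    show -((i j : ℚ_[p])) * cfun p k I b x j = _
    rw [cfun]
    push_cast
    ring
  rw [Finset.sum_congr rfl fun j _ => e3 j]
  rw [Finset.sum_sub_distrib]
  have e4 : ∀ j, qm p ((-(i j * b j : ℤ_[p]) : ℤ_[p]) : ℚ_[p]) = 0 := fun j => qm_coe p _
  rw [Finset.sum_congr rfl fun j _ => e4 j]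
  simp

variable (hI : ∀ j, PadicInt.toZModPow k (I j) = α (Pi.single j 1))

/-- The character of `T(α)` attached to `(b, x)`. -/
noncomputable def PhiFun (b : Fin h → ℤ_[p]) (x : ℤ_[p]) : TA p α →+ QZM p :=
  QuotientAddGroup.lift (pushSub p α) (bigF p k I b x) (bigF_vanish p k α I hI b x)

lemma PhiFun_apply (b : Fin h → ℤ_[p]) (x : ℤ_[p]) (y : ℤ_[p]) (t : Fin h → ℚ_[p]) :
    PhiFun p k α I hI b x (mkT p α (PadicInt.toZModPow k y, t))
      = qm p ((y : ℚ_[p]) * (x : ℚ_[p]) * ek p k)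
        + ∑ j, qm p (t j * cfun p k I b x j) := by
  show bigF p k I b x (PadicInt.toZModPow k y, t) = _
  show chi p k x (PadicInt.toZModPow k y) + _ = _
  rw [chi_toZModPow]

/-- Extensionality for characters of `T(α)`. -/
lemma hom_ext {G₁ G₂ : TA p α →+ QZM p}
    (H : ∀ (y : ℤ_[p]) (t : Fin h → ℚ_[p]),
      G₁ (mkT p α (PadicInt.toZModPow k y, t)) = G₂ (mkT p α (PadicInt.toZModPow k y, t))) :
    G₁ = G₂ := by
  haveI : NeZero (p ^ k) := ⟨pow_ne_zero _ (Fact.out : p.Prime).ne_zero⟩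
  ext z
  obtain ⟨⟨g, t⟩, rfl⟩ := QuotientAddGroup.mk'_surjective (pushSub p α) z
  have hg : g = PadicInt.toZModPow k ((g.val : ℕ) : ℤ_[p]) := by
    rw [map_natCast, ZMod.natCast_rightInverse _]
  have : ((QuotientAddGroup.mk' (pushSub p α)) (g, t)) = mkT p α (g, t) := rfl
  rw [this, hg]
  exact H _ t

/-- The main linear map from the free presentation to the character group. -/
noncomputable def Phi : ((Fin h → ℤ_[p]) × ℤ_[p]) →ₗ[ℤ_[p]] (TA p α →+ QZM p) where
  toFun bx := PhiFun p k α I hI bx.1 bx.2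
  map_add' := by
    rintro ⟨b, x⟩ ⟨b', x'⟩
    refine hom_ext p k α fun y t => ?_
    rw [AddMonoidHom.add_apply]
    show PhiFun p k α I hI (b + b') (x + x') _ = PhiFun p k α I hI b x _ + PhiFun p k α I hI b' x' _
    rw [PhiFun_apply, PhiFun_apply, PhiFun_apply]
    have e1 : ((x + x' : ℤ_[p]) : ℚ_[p]) = (x : ℚ_[p]) + (x' : ℚ_[p]) := by push_cast; ring
    have e2 : ∀ j, qm p (t j * cfun p k I (b + b') (x + x') j)
        = qm p (t j * cfun p k I b x j) + qm p (t j * cfun p k I b' x' j) := by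
      intro j
      rw [← map_add]
      congr 1
      rw [cfun, cfun, cfun, Pi.add_apply]
      push_cast
      ring
    rw [Finset.sum_congr rfl fun j _ => e2 j, Finset.sum_add_distrib, e1, mul_add, add_mul,
      map_add]
    abel
  map_smul' := by
    rintro r ⟨b, x⟩
    refine hom_ext p k α fun y t => ?_
    rw [RingHom.id_apply, AddMonoidHom.smul_apply]
    show PhiFun p k α I hI (r • b) (r • x) _
      = r • (PhiFun p k α I hI b x (mkT p α (PadicInt.toZModPow k y, t)))
    have key : ∀ q' : ℚ_[p], qm p ((r : ℚ_[p]) * q') = r • qm p q' := fun q' =>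
      map_smul (qm p) r q'
    rw [PhiFun_apply, PhiFun_apply, smul_add]
    congr 1
    · rw [← key]
      congr 1
      have e1 : ((r • x : ℤ_[p]) : ℚ_[p]) = (r : ℚ_[p]) * (x : ℚ_[p]) := by
        rw [smul_eq_mul]; push_cast; ring
      rw [e1]; ring
    · rw [Finset.smul_sum]
      refine Finset.sum_congr rfl fun j _ => ?_
      rw [← key]
      congr 1
      rw [cfun, cfun, Pi.smul_apply, smul_eq_mul]
      have e1 : ((r • x : ℤ_[p]) : ℚ_[p]) = (r : ℚ_[p]) * (x : ℚ_[p]) := by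
        rw [smul_eq_mul]; push_cast; ring
      rw [e1]
      push_cast
      ring

lemma Phi_surjective : Function.Surjective (Phi p k α I hI) := by
  haveI : NeZero (p ^ k) := ⟨pow_ne_zero _ (Fact.out : p.Prime).ne_zero⟩
  intro F
  set f₁ : ZMod (p ^ k) →+ QZM p := F.comp ((mkT p α).comp (AddMonoidHom.inl _ _)) with hf1def
  set f₂ : (Fin h → ℚ_[p]) →+ QZM p :=
    F.comp ((mkT p α).comp (AddMonoidHom.inr _ _)) with hf2def
  have compat : ∀ i : Fin h → ℤ_[p], f₂ (incl p h i) = f₁ (α i) := by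
    intro i
    have e1 := mkT_rel p α 0 0 i
    rw [zero_add, zero_add] at e1
    show F (mkT p α (0, incl p h i)) = F (mkT p α (α i, 0))
    rw [e1]
  -- Step A: the value of `f₁`.
  have h1 : (p ^ k : ℕ) • f₁ 1 = 0 := by
    rw [← map_nsmul]
    have : (p ^ k : ℕ) • (1 : ZMod (p ^ k)) = 0 := by
      rw [nsmul_eq_mul, ZMod.natCast_self, zero_mul]
    rw [this, map_zero]
  obtain ⟨q, hq⟩ := qm_surjective p (f₁ 1)
  have h2 : qm p ((p ^ k : ℕ) • q) = 0 := by rw [map_nsmul, hq]; exact h1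
  rw [qm_zero_iff] at h2
  obtain ⟨w, hw⟩ := h2
  have hq' : q = (w : ℚ_[p]) * ek p k := by
    rw [nsmul_eq_mul] at hw
    push_cast at hw
    rw [ek, hw, mul_comm ((p : ℚ_[p]) ^ k) q, mul_assoc,
      mul_inv_cancel₀ (pQ_pow_ne_zero p k), mul_one]
  have hf1 : ∀ y : ℤ_[p], f₁ (PadicInt.toZModPow k y)
      = qm p ((y : ℚ_[p]) * (w : ℚ_[p]) * ek p k) := by
    intro y
    have e1 : PadicInt.toZModPow k y
        = ((PadicInt.toZModPow k y).val : ℕ) • (1 : ZMod (p ^ k)) := by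
      rw [nsmul_eq_mul, mul_one, ZMod.natCast_rightInverse _]
    rw [e1, map_nsmul, ← hq, hq', ← map_nsmul, nsmul_eq_mul, ← mul_assoc,
      qm_mul_ek_congr p k y w]
  -- Step B: the values of `f₂`, via the rigidity lemma.
  have hpsi : ∀ j : Fin h, ∃ b : ℤ_[p], ∀ s : ℚ_[p],
      f₂ (Pi.single j s) = qm p (s * (I j : ℚ_[p]) * (w : ℚ_[p]) * ek p k + s * (b : ℚ_[p])) := by
    intro j
    set ψ : ℚ_[p] →+ QZM p :=
      (f₂.comp (AddMonoidHom.single (fun _ : Fin h => ℚ_[p]) j))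
        - AddMonoidHom.mk' (fun s : ℚ_[p] => qm p (s * ((I j : ℚ_[p]) * (w : ℚ_[p]) * ek p k)))
            (by intro a b; simp only [add_mul, map_add]) with hψdef
    have hψ : ∀ z : ℤ_[p], ψ (z : ℚ_[p]) = 0 := by
      intro z
      rw [hψdef, AddMonoidHom.sub_apply]
      have hfun : (Pi.single j ((z : ℤ_[p]) : ℚ_[p]) : Fin h → ℚ_[p])
          = incl p h (Pi.single j z) := by
        funext j'
        show (Pi.single j ((z : ℤ_[p]) : ℚ_[p]) : Fin h → ℚ_[p]) j'
          = (((Pi.single j z : Fin h → ℤ_[p]) j' : ℤ_[p]) : ℚ_[p])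
        rcases eq_or_ne j' j with rfl | hne
        · rw [Pi.single_eq_same, Pi.single_eq_same]
        · rw [Pi.single_eq_of_ne hne, Pi.single_eq_of_ne hne, PadicInt.coe_zero]
      have e1 : f₂.comp (AddMonoidHom.single (fun _ : Fin h => ℚ_[p]) j) ((z : ℤ_[p]) : ℚ_[p])
          = f₂ (incl p h (Pi.single j z)) := by
        show f₂ (Pi.single j ((z : ℤ_[p]) : ℚ_[p])) = f₂ (incl p h (Pi.single j z))
        rw [hfun]
      rw [e1, compat, alpha_apply p k α I hI]
      have e2 : ∑ j', PadicInt.toZModPow k (Pi.single j z j' * I j')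
          = PadicInt.toZModPow k (z * I j) := by
        have e2' := Fintype.sum_eq_single
          (f := fun j' => PadicInt.toZModPow k (Pi.single j z j' * I j')) j
          (fun j' hj' => by
            show PadicInt.toZModPow k ((Pi.single j z : Fin h → ℤ_[p]) j' * I j') = 0
            rw [Pi.single_eq_of_ne hj', zero_mul, map_zero])
        rw [e2']
        show PadicInt.toZModPow k ((Pi.single j z : Fin h → ℤ_[p]) j * I j) = _
        rw [Pi.single_eq_same]
      rw [e2, hf1]
      show qm p _ - qm p ((z : ℚ_[p]) * ((I j : ℚ_[p]) * (w : ℚ_[p]) * ek p k)) = 0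
      rw [← map_sub]
      have e3 : ((z * I j : ℤ_[p]) : ℚ_[p]) * (w : ℚ_[p]) * ek p k
          - (z : ℚ_[p]) * ((I j : ℚ_[p]) * (w : ℚ_[p]) * ek p k) = 0 := by
        push_cast
        ring
      rw [e3, map_zero]
    obtain ⟨b, hb⟩ := rigid p ψ hψ
    refine ⟨b, fun s => ?_⟩
    have e4 := hb s
    rw [hψdef, AddMonoidHom.sub_apply, sub_eq_iff_eq_add] at e4
    show f₂ (Pi.single j s) = _
    have e5 : f₂.comp (AddMonoidHom.single (fun _ : Fin h => ℚ_[p]) j) s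
        = f₂ (Pi.single j s) := rfl
    rw [← e5, e4]
    show qm p (s * (b : ℚ_[p])) + qm p (s * ((I j : ℚ_[p]) * (w : ℚ_[p]) * ek p k)) = _
    rw [← map_add]
    congr 1
    ring
  choose bb hbb using hpsi
  refine ⟨(bb, w), ?_⟩
  refine hom_ext p k α fun y t => ?_
  show PhiFun p k α I hI bb w _ = F _
  rw [PhiFun_apply]
  have e6 : ((PadicInt.toZModPow k y : ZMod (p ^ k)), t)
      = ((PadicInt.toZModPow k y : ZMod (p ^ k)), (0 : Fin h → ℚ_[p])) + (0, t) := by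
    rw [Prod.mk_add_mk, add_zero, zero_add]
  rw [e6, map_add, map_add]
  have e7 : F (mkT p α (PadicInt.toZModPow k y, 0)) = qm p ((y : ℚ_[p]) * (w : ℚ_[p]) * ek p k) :=
    hf1 y
  have e8 : F (mkT p α (0, t)) = ∑ j, qm p (t j * cfun p k I bb w j) := by
    have e9 : t = ∑ j, Pi.single j (t j) := (Finset.univ_sum_single t).symm
    have e10 : F (mkT p α (0, t)) = f₂ t := rfl
    rw [e10]
    conv_lhs => rw [e9]
    rw [map_sum]
    refine Finset.sum_congr rfl fun j _ => ?_
    rw [hbb j (t j)]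
    congr 1
    rw [cfun]
    push_cast
    ring
  rw [e7, e8]

lemma Phi_ker : LinearMap.ker (Phi p k α I hI)
    = Submodule.span ℤ_[p] {((fun j => -(I j), (p : ℤ_[p]) ^ k) : (Fin h → ℤ_[p]) × ℤ_[p])} := by
  have hpR : (1 : ℝ) < (p : ℝ) := by exact_mod_cast (Fact.out : p.Prime).one_lt
  apply le_antisymm
  · rintro ⟨b, x⟩ hbx
    rw [LinearMap.mem_ker] at hbx
    have hbx' : ∀ (y : ℤ_[p]) (t : Fin h → ℚ_[p]),
        qm p ((y : ℚ_[p]) * (x : ℚ_[p]) * ek p k) + ∑ j, qm p (t j * cfun p k I b x j) = 0 := by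
      intro y t
      rw [← PhiFun_apply p k α I hI]
      show Phi p k α I hI (b, x) _ = 0
      rw [hbx]
      rfl
    -- x is divisible by p^k
    have hx : (p : ℤ_[p]) ^ k ∣ x := by
      have e1 := hbx' 1 0
      have e2 : ∀ j : Fin h, qm p ((0 : Fin h → ℚ_[p]) j * cfun p k I b x j) = 0 := by
        intro j
        rw [Pi.zero_apply, zero_mul, map_zero]
      rw [Finset.sum_congr rfl fun j _ => e2 j, Finset.sum_const_zero, add_zero] at e1
      rw [PadicInt.coe_one, one_mul] at e1
      rw [qm_zero_iff] at e1
      obtain ⟨z, hz⟩ := e1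
      exact dvd_of_coe_eq p k x z hz
    obtain ⟨t0, ht0⟩ := hx
    -- each coefficient vanishes
    have hcf : ∀ j, cfun p k I b x j = 0 := by
      intro j
      have key : ∀ n : ℕ, ‖cfun p k I b x j‖ ≤ (p : ℝ) ^ (-(n : ℤ)) := by
        intro n
        have e1 := hbx' 0 (Pi.single j (ek p n))
        rw [PadicInt.coe_zero, zero_mul, zero_mul, map_zero, zero_add] at e1
        have e2 : ∀ j' : Fin h, j' ≠ j →
            qm p ((Pi.single j (ek p n) : Fin h → ℚ_[p]) j' * cfun p k I b x j') = 0 := by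
          intro j' hj'
          rw [Pi.single_eq_of_ne hj', zero_mul, map_zero]
        have e3 : ∑ j', qm p ((Pi.single j (ek p n) : Fin h → ℚ_[p]) j' * cfun p k I b x j')
            = qm p (ek p n * cfun p k I b x j) := by
          have e3' := Fintype.sum_eq_single
            (f := fun j' => qm p ((Pi.single j (ek p n) : Fin h → ℚ_[p]) j' * cfun p k I b x j'))
            j (fun j' hj' => e2 j' hj')
          rw [e3']
          show qm p ((Pi.single j (ek p n) : Fin h → ℚ_[p]) j * cfun p k I b x j) = _
          rw [Pi.single_eq_same]
        rw [e3] at e1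
        rw [qm_zero_iff] at e1
        obtain ⟨z, hz⟩ := e1
        have e5' : (p : ℚ_[p]) ^ n * (z : ℚ_[p])
            = (p : ℚ_[p]) ^ n * (ek p n * cfun p k I b x j) := by rw [hz]
        rw [ek, ← mul_assoc, mul_inv_cancel₀ (pQ_pow_ne_zero p n), one_mul] at e5'
        have e5 : cfun p k I b x j = (z : ℚ_[p]) * (p : ℚ_[p]) ^ n := by
          rw [← e5']; ring
        have e5n : ((p : ℝ)⁻¹) ^ n = (p : ℝ) ^ (-(n : ℤ)) := by
          rw [inv_pow, ← zpow_natCast, ← zpow_neg]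
        rw [e5, norm_mul, norm_pow, Padic.norm_p, e5n]
        calc ‖(z : ℚ_[p])‖ * (p : ℝ) ^ (-(n : ℤ)) ≤ 1 * (p : ℝ) ^ (-(n : ℤ)) := by
              apply mul_le_mul_of_nonneg_right (z.2) (by positivity)
          _ = (p : ℝ) ^ (-(n : ℤ)) := one_mul _
      have h0 : ‖cfun p k I b x j‖ ≤ 0 := by
        have htd : Filter.Tendsto (fun n : ℕ => (p : ℝ) ^ (-(n : ℤ))) Filter.atTop (nhds 0) := by
          have e7 : (fun n : ℕ => (p : ℝ) ^ (-(n : ℤ))) = fun n : ℕ => ((p : ℝ)⁻¹) ^ n := by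
            funext n; rw [zpow_neg, ← inv_zpow, zpow_natCast]
          rw [e7]
          exact tendsto_pow_atTop_nhds_zero_of_lt_one (by positivity) (inv_lt_one_of_one_lt₀ hpR)
        exact ge_of_tendsto htd (Filter.Eventually.of_forall key)
      exact norm_eq_zero.mp (le_antisymm h0 (norm_nonneg _))
    have hbj : ∀ j, b j = -(I j) * t0 := by
      intro j
      have e6 := hcf j
      rw [cfun, ht0] at e6
      have e7 : ((b j : ℤ_[p]) : ℚ_[p]) = ((-(I j) * t0 : ℤ_[p]) : ℚ_[p]) := by
        push_cast at e6 ⊢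
        linear_combination e6 - (I j : ℚ_[p]) * (t0 : ℚ_[p]) * (pow_mul_ek p k)
      exact Subtype.coe_injective e7
    refine Submodule.mem_span_singleton.mpr ⟨t0, ?_⟩
    refine Prod.ext_iff.mpr ⟨?_, ?_⟩
    · show t0 • (fun j => -(I j)) = b
      funext j
      show t0 * (-(I j)) = b j
      rw [hbj j]
      ring
    · show t0 • ((p : ℤ_[p]) ^ k) = x
      rw [smul_eq_mul, ht0]
      ring
  · rw [Submodule.span_le, Set.singleton_subset_iff, SetLike.mem_coe, LinearMap.mem_ker]
    have : Phi p k α I hI ((fun j => -(I j)), (p : ℤ_[p]) ^ k) = 0 := by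
      refine hom_ext p k α fun y t => ?_
      show PhiFun p k α I hI _ _ _ = (0 : TA p α →+ QZM p) _
      rw [PhiFun_apply, AddMonoidHom.zero_apply]
      have e1 : (y : ℚ_[p]) * (((p : ℤ_[p]) ^ k : ℤ_[p]) : ℚ_[p]) * ek p k = ((y : ℤ_[p]) : ℚ_[p]) := by
        push_cast
        rw [mul_assoc, pow_mul_ek, mul_one]
      rw [e1, qm_coe, zero_add]
      have e2 : ∀ j, qm p (t j * cfun p k I (fun j' => -(I j')) ((p : ℤ_[p]) ^ k) j) = 0 := by
        intro j
        have e3 : cfun p k I (fun j' => -(I j')) ((p : ℤ_[p]) ^ k) j = 0 := by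
          rw [cfun]
          push_cast
          rw [mul_assoc, pow_mul_ek]
          ring
        rw [e3, mul_zero, map_zero]
      rw [Finset.sum_congr rfl fun j _ => e2 j, Finset.sum_const_zero]
    exact this

end Presentation
/-- Let `α : ℤ_p^h → ℤ/p^k` be a homomorphism with `α(b_j) = i_j`, lifted
to `I_j ∈ ℤ_p`. The Pontryagin dual `Hom(T(α), ℚ_p/ℤ_p)` of the pushout
`T(α) = (ℤ/p^k) ⊕_{ℤ_p^h} ℚ_p^h` is isomorphic, as a `ℤ_p`-module, to the quotient of the
free `ℤ_p`-module on generators `b_1, …, b_h, x` by the single relation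
`p^k·x = i_1·b_1 + ⋯ + i_h·b_h`. -/
theorem pontryagin_dual_presentation (h k : ℕ) (α : (Fin h → ℤ_[p]) →+ ZMod (p ^ k))
    (I : Fin h → ℤ_[p]) (hI : ∀ j, PadicInt.toZModPow k (I j) = α (Pi.single j 1)) :
    Nonempty ((TA p α →+ QZM p) ≃ₗ[ℤ_[p]]
      (((Fin h → ℤ_[p]) × ℤ_[p]) ⧸
        Submodule.span ℤ_[p] {((fun j => -(I j), (p : ℤ_[p]) ^ k) :
          (Fin h → ℤ_[p]) × ℤ_[p])})) := by
  exact ⟨((Submodule.quotEquivOfEq _ _ (Phi_ker p k α I hI).symm).trans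
    ((Phi p k α I hI).quotKerEquivOfSurjective (Phi_surjective p k α I hI))).symm⟩

end TwistedChar
end

section
/- Each group T(α)_i (the pushout of C(im α) ← Z_p^h →(×p^i) Z_p^h, with α the left map) is a finite group, and there is a short exact sequence 0 → C(im α) → T(α)_i → (Z/p^i)^h → 0. -/
/-! Reducing the second coordinate mod `pⁱ` kills the relations, so it defines a surjection
`T(α)_i → (ℤ/pⁱ)^h`. Its kernel consists of the classes `[g, pⁱ s] = [g α(s), 0]`, i.e. the image
of `C(im α)`, and `[g, 0]` is trivial only for `g = 1` because `pⁱ` is not a zero divisor on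
`ℤ_p^h`. Thus `T(α)_i` is an extension of the finite group `(ℤ/pⁱ)^h` by `C(im α) ≤ G`. -/

open scoped Classical

namespace TwistedChar

variable (p : ℕ) [Fact p.Prime]

variable {h : ℕ} {G : Type*} [Group G]

/-- The centralizer `C(im α)` of the image of `α`. -/
def Cent {p : ℕ} [Fact p.Prime] {h : ℕ} {G : Type*} [Group G] (α : Multiplicative (Fin h → ℤ_[p]) →* G) : Subgroup G :=
  Subgroup.centralizer (Set.range α)

lemma alpha_mem_cent {p : ℕ} [Fact p.Prime] {h : ℕ} {G : Type*} [Group G] (α : Multiplicative (Fin h → ℤ_[p]) →* G)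
    (i : Multiplicative (Fin h → ℤ_[p])) : α i ∈ Cent α := by
  rw [Cent, Subgroup.mem_centralizer_iff]
  rintro g ⟨j, rfl⟩
  rw [← map_mul, ← map_mul, mul_comm]

/-- The map `ℤ_p^h → C(im α) × ℚ_p^h` whose (normal) image one kills to form the
pushout `T(α) = C(im α) ⊕_{ℤ_p^h} ℚ_p^h`. -/
noncomputable def nu (α : Multiplicative (Fin h → ℤ_[p]) →* G) :
    Multiplicative (Fin h → ℤ_[p]) →* (Cent α × Multiplicative (Fin h → ℚ_[p])) :=
  MonoidHom.mk' (fun i =>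
    ((⟨α i, alpha_mem_cent α i⟩ : Cent α)⁻¹, Multiplicative.ofAdd (incl p h i.toAdd)))
    (by
      intro a b
      rw [Prod.mk_mul_mk]
      refine Prod.ext ?_ ?_
      · dsimp only
        rw [← mul_inv_rev]
        congr 1
        ext
        show α (a * b) = α b * α a
        rw [← map_mul, mul_comm a b]
      · dsimp only
        show Multiplicative.ofAdd (incl p h (Multiplicative.toAdd (a * b))) = _
        rw [← ofAdd_add, ← map_add]
        rfl)

lemma nu_range_central (α : Multiplicative (Fin h → ℤ_[p]) →* G)
    (x : (Cent α × Multiplicative (Fin h → ℚ_[p]))) (hx : x ∈ (nu p α).range)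
    (y : (Cent α × Multiplicative (Fin h → ℚ_[p]))) : x * y = y * x := by
  obtain ⟨i, rfl⟩ := hx
  refine Prod.ext ?_ (mul_comm _ _)
  show _ = _
  ext
  show ((α i)⁻¹ * (y.1 : G)) = (y.1 : G) * (α i)⁻¹
  have hc : Commute (α i) (y.1 : G) := Subgroup.mem_centralizer_iff.mp y.1.2 (α i) ⟨i, rfl⟩
  exact hc.inv_left

instance nu_range_normal (α : Multiplicative (Fin h → ℤ_[p]) →* G) :
    ((nu p α).range).Normal := by
  constructor
  intro n hn g
  rw [← nu_range_central p α n hn g, mul_assoc, mul_inv_cancel, mul_one]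
  exact hn

/-- The pushout group `T(α) = C(im α) ⊕_{ℤ_p^h} ℚ_p^h`. -/
noncomputable def TG (α : Multiplicative (Fin h → ℤ_[p]) →* G) : Type _ :=
  (Cent α × Multiplicative (Fin h → ℚ_[p])) ⧸ (nu p α).range

noncomputable instance (α : Multiplicative (Fin h → ℤ_[p]) →* G) : Group (TG p α) :=
  QuotientGroup.Quotient.group _

/-- The canonical surjection onto `T(α)`. -/
noncomputable def mkG (α : Multiplicative (Fin h → ℤ_[p]) →* G) :
    (Cent α × Multiplicative (Fin h → ℚ_[p])) →* TG p α :=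
  QuotientGroup.mk' _

/-- The quotient map `T(α) → (ℚ_p/ℤ_p)^h`, `[g, t] ↦ t mod ℤ_p^h`. -/
noncomputable def psi (α : Multiplicative (Fin h → ℤ_[p]) →* G) :
    TG p α →* Multiplicative (Fin h → QZ p) :=
  QuotientGroup.lift _
    (MonoidHom.mk' (fun x => Multiplicative.ofAdd (qmap p h x.2.toAdd))
      (by intro a b; rw [← ofAdd_add, ← map_add]; rfl))
    (by
      rintro x ⟨i, rfl⟩
      show Multiplicative.ofAdd (qmap p h (incl p h i.toAdd)) = 1
      rw [qmap_incl]
      rfl)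

/-- The inclusion `C(im α) → T(α)`, `g ↦ [g, 0]`. -/
noncomputable def iota (α : Multiplicative (Fin h → ℤ_[p]) →* G) : Cent α →* TG p α :=
  (mkG p α).comp (MonoidHom.inl _ _)


/-- The map `ℤ_p^h → C(im α) × ℤ_p^h`, `j ↦ ((α j)⁻¹, p^i · j)`, whose (normal) image one
kills to form the finite-level pushout `T(α)_i = C(im α) ⊕_{ℤ_p^h} (1/pⁱ)ℤ_p^h`. -/
noncomputable def nui (i : ℕ) (α : Multiplicative (Fin h → ℤ_[p]) →* G) :
    Multiplicative (Fin h → ℤ_[p]) →* (Cent α × Multiplicative (Fin h → ℤ_[p])) :=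
  MonoidHom.mk' (fun j =>
    ((⟨α j, alpha_mem_cent α j⟩ : Cent α)⁻¹,
      Multiplicative.ofAdd ((p : ℤ_[p]) ^ i • Multiplicative.toAdd j)))
    (by
      intro a b
      rw [Prod.mk_mul_mk]
      refine Prod.ext ?_ ?_
      · dsimp only
        rw [← mul_inv_rev]
        congr 1
        ext
        show α (a * b) = α b * α a
        rw [← map_mul, mul_comm a b]
      · dsimp only
        show Multiplicative.ofAdd ((p : ℤ_[p]) ^ i • Multiplicative.toAdd (a * b)) = _
        rw [← ofAdd_add, ← smul_add]
        rfl)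

lemma nui_range_central (i : ℕ) (α : Multiplicative (Fin h → ℤ_[p]) →* G)
    (x : (Cent α × Multiplicative (Fin h → ℤ_[p]))) (hx : x ∈ (nui p i α).range)
    (y : (Cent α × Multiplicative (Fin h → ℤ_[p]))) : x * y = y * x := by
  obtain ⟨j, rfl⟩ := hx
  refine Prod.ext ?_ (mul_comm _ _)
  show _ = _
  ext
  show ((α j)⁻¹ * (y.1 : G)) = (y.1 : G) * (α j)⁻¹
  have hc : Commute (α j) (y.1 : G) := Subgroup.mem_centralizer_iff.mp y.1.2 (α j) ⟨j, rfl⟩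
  exact hc.inv_left

instance nui_range_normal (i : ℕ) (α : Multiplicative (Fin h → ℤ_[p]) →* G) :
    ((nui p i α).range).Normal := by
  constructor
  intro n hn g
  rw [← nui_range_central p i α n hn g, mul_assoc, mul_inv_cancel, mul_one]
  exact hn

/-- The finite-level pushout `T(α)_i = C(im α) ⊕_{ℤ_p^h} ℤ_p^h` along `α` and
multiplication by `pⁱ`. -/
noncomputable def TGi (i : ℕ) (α : Multiplicative (Fin h → ℤ_[p]) →* G) : Type _ :=
  (Cent α × Multiplicative (Fin h → ℤ_[p])) ⧸ (nui p i α).range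

noncomputable instance (i : ℕ) (α : Multiplicative (Fin h → ℤ_[p]) →* G) :
    Group (TGi p i α) :=
  QuotientGroup.Quotient.group _

/-- The canonical surjection onto `T(α)_i`. -/
noncomputable def mkGi (i : ℕ) (α : Multiplicative (Fin h → ℤ_[p]) →* G) :
    (Cent α × Multiplicative (Fin h → ℤ_[p])) →* TGi p i α :=
  QuotientGroup.mk' _

/-- The inclusion `C(im α) → T(α)_i`, `g ↦ [g, 0]`. -/
noncomputable def iotai (i : ℕ) (α : Multiplicative (Fin h → ℤ_[p]) →* G) :
    Cent α →* TGi p i α :=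
  (mkGi p i α).comp (MonoidHom.inl _ _)

/-- The quotient map `T(α)_i → (ℤ/pⁱ)^h`, `[g, t] ↦ t mod pⁱ`. -/
noncomputable def rhoi (i : ℕ) (α : Multiplicative (Fin h → ℤ_[p]) →* G) :
    TGi p i α →* Multiplicative (Fin h → ZMod (p ^ i)) :=
  QuotientGroup.lift _
    (MonoidHom.mk' (fun x =>
        Multiplicative.ofAdd (fun j => PadicInt.toZModPow i (Multiplicative.toAdd x.2 j)))
      (by
        intro a b
        have hab : (fun j => PadicInt.toZModPow i (Multiplicative.toAdd (a * b).2 j))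
            = fun j => PadicInt.toZModPow i (Multiplicative.toAdd a.2 j)
              + PadicInt.toZModPow i (Multiplicative.toAdd b.2 j) := by
          funext j
          show PadicInt.toZModPow i (Multiplicative.toAdd a.2 j + Multiplicative.toAdd b.2 j) = _
          rw [map_add]
        show Multiplicative.ofAdd _ = _
        rw [hab]
        rfl))
    (by
      rintro x ⟨j, rfl⟩
      show Multiplicative.ofAdd
          (fun m => PadicInt.toZModPow i (((p : ℤ_[p]) ^ i • Multiplicative.toAdd j) m)) = 1
      have : ∀ m, PadicInt.toZModPow i (((p : ℤ_[p]) ^ i • Multiplicative.toAdd j) m) = 0 := by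
        intro m
        show PadicInt.toZModPow i ((p : ℤ_[p]) ^ i * Multiplicative.toAdd j m) = 0
        rw [map_mul, map_pow, map_natCast, ← Nat.cast_pow, ZMod.natCast_self, zero_mul]
      simp only [this]
      rfl)

theorem _root_.PadicInt.exists_eq_pow_smul_of_forall_toZModPow_eq_zero {ι : Type*} {n : ℕ}
    {t : ι → ℤ_[p]} (ht : ∀ m, PadicInt.toZModPow n (t m) = 0) :
    ∃ s : ι → ℤ_[p], t = (p : ℤ_[p]) ^ n • s := by
  have hdvd : ∀ m, ∃ s, t m = (p : ℤ_[p]) ^ n * s := fun m => by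
    have hm : t m ∈ RingHom.ker (PadicInt.toZModPow (p := p) n) := ht m
    rwa [PadicInt.ker_toZModPow, Ideal.mem_span_singleton] at hm
  choose s hs using hdvd
  exact ⟨s, funext hs⟩

section FiniteLevel

variable (i : ℕ) (α : Multiplicative (Fin h → ℤ_[p]) →* G)

lemma mkGi_nui (j : Multiplicative (Fin h → ℤ_[p])) : mkGi p i α (nui p i α j) = 1 :=
  (QuotientGroup.eq_one_iff _).mpr ⟨j, rfl⟩

lemma mkGi_add_pow_smul (g : Cent α) (t s : Fin h → ℤ_[p]) :
    mkGi p i α (g, .ofAdd (t + (p : ℤ_[p]) ^ i • s))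
      = mkGi p i α (g * ⟨α (.ofAdd s), alpha_mem_cent α _⟩, .ofAdd t) := by
  rw [← mul_one (mkGi p i α (g * _, _)), ← mkGi_nui p i α (.ofAdd s), ← map_mul]
  congr 1
  exact Prod.ext (by simp [nui]) rfl

lemma iotai_injective : Function.Injective (iotai p i α) := by
  rw [injective_iff_map_eq_one]
  intro g hg
  obtain ⟨j, hj⟩ := (QuotientGroup.eq_one_iff _).mp hg
  have hj_one : j = 1 := by
    have hsmul : (p : ℤ_[p]) ^ i • j.toAdd = 0 := congrArg (·.toAdd) (congrArg Prod.snd hj)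
    have hp : (p : ℤ_[p]) ^ i ≠ 0 :=
      pow_ne_zero i (Nat.cast_ne_zero.mpr (Fact.out : p.Prime).ne_zero)
    exact (smul_eq_zero.mp hsmul).resolve_left hp
  have hg_eq : g = (⟨α j, alpha_mem_cent α j⟩ : Cent α)⁻¹ := (congrArg Prod.fst hj).symm
  rw [hg_eq, hj_one]
  ext
  simp

lemma rhoi_comp_iotai : (rhoi p i α).comp (iotai p i α) = 1 := by
  ext g m
  exact map_zero (PadicInt.toZModPow i)

lemma rhoi_surjective : Function.Surjective (rhoi p i α) := by
  intro c
  choose r hr using fun m => ZMod.ringHom_surjective (PadicInt.toZModPow i) (c.toAdd m)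
  exact ⟨mkGi p i α (1, .ofAdd r), funext hr⟩

lemma range_iotai_eq_ker_rhoi : (iotai p i α).range = (rhoi p i α).ker := by
  refine le_antisymm ((MonoidHom.range_le_ker_iff _ _).mpr (rhoi_comp_iotai p i α)) ?_
  intro x hx
  obtain ⟨⟨g, t⟩, rfl⟩ := QuotientGroup.mk'_surjective _ x
  have ht : ∀ m, PadicInt.toZModPow i (t.toAdd m) = 0 := congrFun hx
  obtain ⟨s, hs⟩ := PadicInt.exists_eq_pow_smul_of_forall_toZModPow_eq_zero p ht
  refine ⟨g * ⟨α (.ofAdd s), alpha_mem_cent α _⟩, ?_⟩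
  have ht_eq : t = .ofAdd (0 + (p : ℤ_[p]) ^ i • s) := by rw [zero_add, ← hs]; rfl
  rw [ht_eq]
  exact (mkGi_add_pow_smul p i α g 0 s).symm

lemma finite_TGi [Finite G] : Finite (TGi p i α) := by
  have : NeZero (p ^ i) := ⟨pow_ne_zero i (Fact.out : p.Prime).ne_zero⟩
  refine (rhoi p i α).finite_iff_finite_ker_range.mpr ⟨?_, inferInstance⟩
  rw [← range_iotai_eq_ker_rhoi]
  exact Finite.of_surjective _ (iotai p i α).rangeRestrict_surjective

end FiniteLevel

theorem finite_level_pushout_finite_and_short_exact [Finite G]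
    (α : Multiplicative (Fin h → ℤ_[p]) →* G) (i : ℕ) :
    Finite (TGi p i α) ∧
    Function.Injective (iotai p i α) ∧
    Function.Surjective (rhoi p i α) ∧
    (iotai p i α).range = (rhoi p i α).ker :=
  ⟨finite_TGi p i α, iotai_injective p i α, rhoi_surjective p i α, range_iotai_eq_ker_rhoi p i α⟩

end TwistedChar
end

section
/- Let G be a finite group acting on a set X, and let H_0 = ⨆_{[α]} X^{im α} (coproduct over a chosen set of representatives of conjugacy classes of homomorphisms α: Z_p^h → G). The map sending (X^{im α}, representative α) into ⨆_{α ∈ Hom(Z_p^h, G)} X^{im α} is part of an essentially surjective and fully faithful functor of groupoids from the action groupoid of the T(α)-actions on X^{im α} (over conjugacy class representatives) to the groupoid with objects ⨆_α X^{im α} and morphisms T(α,β) × X^{im α}; in particular, for each β: Z_p^h → G and x ∈ X^{im β}, there exist a representative α of the conjugacy class of β, an element [g,t] ∈ T(α,β), and y ∈ X^{im α} with [g,t]·y = x. -/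
open scoped Classical

namespace TwistedChar

variable (p : ℕ) [Fact p.Prime]

variable {h : ℕ} {G : Type*} [Group G]

/-- Let `R` be a choice of representatives for the conjugation action
of `G` on `Hom(ℤ_p^h, G)` (so `R β` is conjugate to `β`, and conjugate homomorphisms have
the same representative).  Essential surjectivity of the comparison functor of groupoids:
for every `β` and every `x ∈ X^{im β}` there are an element `[g, t] ∈ T(R β, β)` (here
with `t = 0`, i.e. `g ∈ C(R β, β)`) and `y ∈ X^{im R β}` with `[g, t]·y = g·y = x`. -/
theorem groupoid_comparison_essentially_surjective [Finite G] (X : Type*) [MulAction G X]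
    (R : (Multiplicative (Fin h → ℤ_[p]) →* G) → (Multiplicative (Fin h → ℤ_[p]) →* G))
    (hR : ∀ β, ∃ g : G, ∀ i, R β i = g * β i * g⁻¹)
    (hR2 : ∀ β β', (∃ g : G, ∀ i, β' i = g * β i * g⁻¹) → R β = R β')
    (β : Multiplicative (Fin h → ℤ_[p]) →* G) (x : X) (hx : ∀ i, β i • x = x) :
    ∃ (g : G) (y : X),
      (∀ i, g * (R β) i * g⁻¹ = β i) ∧
      (∀ i, (R β) i • y = y) ∧
      g • y = x := by
  obtain ⟨g, hg⟩ := hR β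
  refine ⟨g⁻¹, g • x, ?_, ?_, ?_⟩
  · intro i; rw [hg i]; group
  · intro i; rw [hg i, mul_smul, mul_smul, inv_smul_smul, hx]
  · simp

end TwistedChar
end

section
/- Let α: Z_p^h → Z/p^k send basis element b_j to i_j ∈ Z/p^k, and define x: T(α) → Q_p/Z_p by [g, (t_1,...,t_h)] ↦ f(g) + Σ_j f(i_j)·t_j where f: Z/p^k → Q_p/Z_p sends m ↦ m/p^k. Then x is a well-defined group homomorphism and satisfies p^k·x = i_1·(π_1∘c) + ... + i_h·(π_h∘c) in Hom(T(α), Q_p/Z_p), where c: T(α) → (Q_p/Z_p)^h is the quotient and π_j the j-th projection. Moreover the combined map (π_1∘c, ..., π_h∘c, x): T(α) → (Q_p/Z_p)^{h+1} is injective. -/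
open scoped Classical

namespace TwistedChar

variable (p : ℕ) [Fact p.Prime]

variable {h : ℕ} {A : Type*} [AddCommGroup A]

lemma incl_mem_zSubM (h : ℕ) (i : Fin h → ℤ_[p]) (j : Fin h) :
    incl p h i j ∈ zSubM p :=
  ⟨i j, rfl⟩

/-- The quotient map `T(α) → (ℚ_p/ℤ_p)^h`, `[g, t] ↦ t mod ℤ_p^h` (module-quotient
version). -/
noncomputable def cM {h : ℕ} {A : Type*} [AddCommGroup A] (α : (Fin h → ℤ_[p]) →+ A) :
    TA p α →+ (Fin h → QZM p) :=
  QuotientAddGroup.lift _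
    (AddMonoidHom.mk' (fun x j => qmapM p (x.2 j)) (by
      intro a b; funext j; show qmapM p ((a.2 + b.2) j) = _; rw [Pi.add_apply, map_add]; rfl))
    (by
      rintro ⟨a, t⟩ ⟨i, hi⟩
      have h2 : t = -(incl p h i) := congrArg Prod.snd hi.symm
      rw [AddMonoidHom.mem_ker]
      show (fun j => qmapM p (t j)) = 0
      funext j
      rw [h2]
      show qmapM p (-(incl p h i j)) = 0
      rw [map_neg, neg_eq_zero]
      exact (Submodule.Quotient.mk_eq_zero _).mpr (incl_mem_zSubM p h i j))

/-- `f : ℤ/p^k → ℚ_p/ℤ_p`, `m ↦ m/p^k`. -/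
noncomputable def fdiv (k : ℕ) : ZMod (p ^ k) →+ QZM p :=
  ZMod.lift (p ^ k)
    ⟨(qmapM p).comp (AddMonoidHom.mk' (fun z : ℤ => (z : ℚ_[p]) / (p : ℚ_[p]) ^ k) (by
        intro a b; push_cast; ring)), by
      have hpk : ((p : ℚ_[p])) ^ k ≠ 0 :=
        pow_ne_zero _ (Nat.cast_ne_zero.mpr (Fact.out (p := p.Prime)).ne_zero)
      show qmapM p ((((p ^ k : ℕ) : ℤ) : ℚ_[p]) / (p : ℚ_[p]) ^ k) = 0
      have : ((((p ^ k : ℕ) : ℤ)) : ℚ_[p]) / (p : ℚ_[p]) ^ k = 1 := by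
        push_cast
        field_simp
      rw [this]
      exact (Submodule.Quotient.mk_eq_zero _).mpr ⟨1, by simp⟩⟩


section Aux

lemma qmapM_coe (z : ℤ_[p]) : qmapM p (z : ℚ_[p]) = 0 :=
  (Submodule.Quotient.mk_eq_zero _).mpr ⟨z, rfl⟩

lemma qmapM_smul (c : ℤ_[p]) (w : ℚ_[p]) :
    c • qmapM p w = qmapM p ((c : ℚ_[p]) * w) := by
  show c • (zSubM p).mkQ w = (zSubM p).mkQ _
  rw [← map_smul, Algebra.smul_def, PadicInt.algebraMap_apply]

lemma fdiv_intCast (k : ℕ) (m : ℤ) :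
    fdiv p k ((m : ℤ) : ZMod (p ^ k)) = qmapM p ((m : ℚ_[p]) / (p : ℚ_[p]) ^ k) :=
  ZMod.lift_coe _ _ m

lemma fdiv_eq (k : ℕ) (g : ZMod (p ^ k)) :
    fdiv p k g = qmapM p (((g.val : ℕ) : ℚ_[p]) / (p : ℚ_[p]) ^ k) := by
  have hg : ((g.val : ℤ) : ZMod (p ^ k)) = g := by
    push_cast
    simp [ZMod.natCast_val, ZMod.cast_id]
  conv_lhs => rw [← hg]
  rw [fdiv_intCast]
  push_cast
  rfl

lemma exists_rep (k : ℕ) (z : ℤ_[p]) :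
    ∃ m : ℤ_[p],
      z = ((((PadicInt.toZModPow k z).val : ℤ)) : ℤ_[p]) + (p : ℤ_[p]) ^ k * m := by
  set n : ℤ := ((PadicInt.toZModPow k z).val : ℤ) with hn
  have hker : z - (n : ℤ_[p]) ∈ RingHom.ker (PadicInt.toZModPow (p := p) k) := by
    rw [RingHom.mem_ker, map_sub, map_intCast, hn]
    push_cast
    simp [ZMod.natCast_val, ZMod.cast_id]
  rw [PadicInt.ker_toZModPow, Ideal.mem_span_singleton] at hker
  obtain ⟨m, hm⟩ := hker
  exact ⟨m, by linear_combination hm⟩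

lemma fdiv_eq_zero (k : ℕ) (g : ZMod (p ^ k)) (hg : fdiv p k g = 0) : g = 0 := by
  rw [fdiv_eq] at hg
  have hg' : ((g.val : ℕ) : ℚ_[p]) / (p : ℚ_[p]) ^ k ∈ zSubM p :=
    (Submodule.Quotient.mk_eq_zero _).mp hg
  obtain ⟨z, hz⟩ := hg'
  have hpk : ((p : ℚ_[p])) ^ k ≠ 0 :=
    pow_ne_zero _ (Nat.cast_ne_zero.mpr (Fact.out (p := p.Prime)).ne_zero)
  have hz' : ((g.val : ℤ_[p]) : ℚ_[p]) = ((z * (p : ℤ_[p]) ^ k : ℤ_[p]) : ℚ_[p]) := by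
    push_cast
    rw [show ((z : ℤ_[p]) : ℚ_[p]) = ((g.val : ℕ) : ℚ_[p]) / (p : ℚ_[p]) ^ k from hz]
    field_simp
  have hz'' : (g.val : ℤ_[p]) = z * (p : ℤ_[p]) ^ k := Subtype.coe_injective hz'
  have h3 := congrArg (PadicInt.toZModPow (p := p) k) hz''
  rw [map_natCast, map_mul, map_pow, map_natCast] at h3
  have hp0 : ((p : ZMod (p ^ k))) ^ k = 0 := by
    have h4 : (((p ^ k : ℕ)) : ZMod (p ^ k)) = 0 := ZMod.natCast_self _
    push_cast at h4
    exact h4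
  rw [hp0, mul_zero] at h3
  calc g = (g.val : ZMod (p ^ k)) := by simp [ZMod.natCast_val, ZMod.cast_id]
    _ = 0 := h3

lemma fdiv_alpha (k : ℕ) (α : (Fin h → ℤ_[p]) →+ ZMod (p ^ k)) (i : Fin h → ℤ_[p]) :
    fdiv p k (α i) =
      qmapM p (∑ j, ((α (Pi.single j 1)).val : ℚ_[p]) * (i j : ℚ_[p]) / (p : ℚ_[p]) ^ k) := by
  classical
  set n : Fin h → ℤ := fun j => ((PadicInt.toZModPow k (i j)).val : ℤ) with hn
  choose m hm using fun j => exists_rep p k (i j)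
  have hi : i = (fun j => ((n j : ℤ_[p]))) + (p ^ k : ℕ) • m := by
    funext j
    show i j = (n j : ℤ_[p]) + (p ^ k : ℕ) • m j
    rw [nsmul_eq_mul]
    push_cast
    exact hm j
  have hsingle : (fun j => ((n j : ℤ_[p]))) = ∑ j, (n j) • Pi.single j (1 : ℤ_[p]) := by
    rw [show (fun j => ((n j : ℤ_[p]))) = ∑ j, Pi.single j ((n j : ℤ_[p]))
      from (Finset.univ_sum_single _).symm]
    congr 1
    funext j
    rw [← Pi.single_smul, zsmul_eq_mul, mul_one]
  have hαi : α i = ∑ j, (n j) • α (Pi.single j 1) := by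
    rw [hi, map_add, map_nsmul]
    have h0 : (p ^ k : ℕ) • α m = 0 := by
      rw [nsmul_eq_mul, ZMod.natCast_self, zero_mul]
    rw [h0, add_zero, hsingle, map_sum]
    exact Finset.sum_congr rfl fun j _ => map_zsmul α _ _
  rw [hαi, map_sum]
  have hL : ∀ j, fdiv p k ((n j) • α (Pi.single j 1)) =
      qmapM p ((n j : ℚ_[p]) * (((α (Pi.single j 1)).val : ℚ_[p]) / (p : ℚ_[p]) ^ k)) := by
    intro j
    rw [map_zsmul, fdiv_eq, ← map_zsmul, zsmul_eq_mul]
  rw [Finset.sum_congr rfl fun j _ => hL j, ← map_sum]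
  rw [eq_comm, ← sub_eq_zero, ← map_sub, ← Finset.sum_sub_distrib]
  have hterm : ∀ j, ((α (Pi.single j 1)).val : ℚ_[p]) * (i j : ℚ_[p]) / (p : ℚ_[p]) ^ k -
      (n j : ℚ_[p]) * (((α (Pi.single j 1)).val : ℚ_[p]) / (p : ℚ_[p]) ^ k) =
      ((((α (Pi.single j 1)).val : ℤ_[p]) * m j : ℤ_[p]) : ℚ_[p]) := by
    intro j
    have hpk : ((p : ℚ_[p])) ^ k ≠ 0 :=
      pow_ne_zero _ (Nat.cast_ne_zero.mpr (Fact.out (p := p.Prime)).ne_zero)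
    have him : (i j : ℚ_[p]) = (n j : ℚ_[p]) + (p : ℚ_[p]) ^ k * (m j : ℚ_[p]) := by
      rw [hm j]
      simp only [hn]
      push_cast
      ring
    rw [him]
    push_cast
    field_simp
    ring
  rw [Finset.sum_congr rfl fun j _ => hterm j]
  have hcs : (∑ j, ((((α (Pi.single j 1)).val : ℤ_[p]) * m j : ℤ_[p]) : ℚ_[p]))
      = (((∑ j, ((α (Pi.single j 1)).val : ℤ_[p]) * m j : ℤ_[p])) : ℚ_[p]) :=
    (map_sum (PadicInt.Coe.ringHom (p := p)) (fun j => ((α (Pi.single j 1)).val : ℤ_[p]) * m j) Finset.univ).symm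
  rw [hcs, qmapM_coe]

end Aux

/-- For `α : ℤ_p^h → ℤ/p^k` with `α(b_j) = i_j`, the map
`x : T(α) → ℚ_p/ℤ_p`, `[g, t] ↦ f(g) + ∑_j f(i_j)·t_j`, is a well-defined group
homomorphism; it satisfies `p^k·x = ∑_j i_j·(π_j ∘ c)` in the `ℤ_p`-module
`Hom(T(α), ℚ_p/ℤ_p)`, and together with the quotient map `c` it embeds `T(α)` into
`(ℚ_p/ℤ_p)^{h+1}`. -/
theorem x_character_exists (h k : ℕ) (α : (Fin h → ℤ_[p]) →+ ZMod (p ^ k)) :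
    ∃ x : TA p α →+ QZM p,
      (∀ (g : ZMod (p ^ k)) (t : Fin h → ℚ_[p]),
        x (mkT p α (g, t)) = fdiv p k g +
          qmapM p (∑ j, ((α (Pi.single j 1)).val : ℚ_[p]) * t j / (p : ℚ_[p]) ^ k)) ∧
      (∀ u : TA p α, (p : ℤ_[p]) ^ k • x u =
        ∑ j, ((α (Pi.single j 1)).val : ℤ_[p]) • cM p α u j) ∧
      Function.Injective (fun u : TA p α => ((fun j => cM p α u j, x u) :
        (Fin h → QZM p) × QZM p)) := by
  classical
  let F : ZMod (p ^ k) × (Fin h → ℚ_[p]) → QZM p := fun gt =>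
    fdiv p k gt.1 +
      qmapM p (∑ j, ((α (Pi.single j 1)).val : ℚ_[p]) * gt.2 j / (p : ℚ_[p]) ^ k)
  have hadd : ∀ a b, F (a + b) = F a + F b := by
    intro a b
    show fdiv p k (a.1 + b.1) +
        qmapM p (∑ j, ((α (Pi.single j 1)).val : ℚ_[p]) * (a.2 + b.2) j / (p : ℚ_[p]) ^ k)
      = _
    have hs : (∑ j, ((α (Pi.single j 1)).val : ℚ_[p]) * (a.2 + b.2) j / (p : ℚ_[p]) ^ k)
        = (∑ j, ((α (Pi.single j 1)).val : ℚ_[p]) * a.2 j / (p : ℚ_[p]) ^ k)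
          + (∑ j, ((α (Pi.single j 1)).val : ℚ_[p]) * b.2 j / (p : ℚ_[p]) ^ k) := by
      rw [← Finset.sum_add_distrib]
      exact Finset.sum_congr rfl fun j _ => by rw [Pi.add_apply]; ring
    rw [map_add, hs, map_add, add_add_add_comm]
  let X : (ZMod (p ^ k) × (Fin h → ℚ_[p])) →+ QZM p := AddMonoidHom.mk' F hadd
  have hvanish : ∀ s ∈ pushSub p α, s ∈ X.ker := by
    rintro ⟨a, t⟩ ⟨i, hi⟩
    have ha : a = α i := (congrArg Prod.fst hi).symm
    have ht : t = -(incl p h i) := (congrArg Prod.snd hi).symm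
    rw [AddMonoidHom.mem_ker]
    show F (a, t) = 0
    show fdiv p k a + qmapM p (∑ j, ((α (Pi.single j 1)).val : ℚ_[p]) * t j / (p : ℚ_[p]) ^ k)
      = 0
    rw [ha, ht, fdiv_alpha p k α i, ← map_add, ← Finset.sum_add_distrib]
    rw [show (∑ j, (((α (Pi.single j 1)).val : ℚ_[p]) * (i j : ℚ_[p]) / (p : ℚ_[p]) ^ k +
        ((α (Pi.single j 1)).val : ℚ_[p]) * (-(incl p h i)) j / (p : ℚ_[p]) ^ k)) = 0 from
      Finset.sum_eq_zero fun j _ => by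
        show ((α (Pi.single j 1)).val : ℚ_[p]) * (i j : ℚ_[p]) / (p : ℚ_[p]) ^ k +
          ((α (Pi.single j 1)).val : ℚ_[p]) * (-(i j : ℚ_[p])) / (p : ℚ_[p]) ^ k = 0
        ring]
    exact map_zero _
  let x : TA p α →+ QZM p := QuotientAddGroup.lift _ X hvanish
  have hx : ∀ (g : ZMod (p ^ k)) (t : Fin h → ℚ_[p]),
      x (mkT p α (g, t)) = fdiv p k g +
        qmapM p (∑ j, ((α (Pi.single j 1)).val : ℚ_[p]) * t j / (p : ℚ_[p]) ^ k) := by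
    intro g t
    rfl
  refine ⟨x, hx, ?_, ?_⟩
  · intro u
    obtain ⟨⟨g, t⟩, rfl⟩ := QuotientAddGroup.mk'_surjective (pushSub p α) u
    have hu : QuotientAddGroup.mk' (pushSub p α) (g, t) = mkT p α (g, t) := rfl
    rw [hu, hx]
    have hpk : ((p : ℚ_[p])) ^ k ≠ 0 :=
      pow_ne_zero _ (Nat.cast_ne_zero.mpr (Fact.out (p := p.Prime)).ne_zero)
    have hcast : (((p : ℤ_[p]) ^ k : ℤ_[p]) : ℚ_[p]) = (p : ℚ_[p]) ^ k := by push_cast; rfl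
    rw [smul_add]
    have h1 : (p : ℤ_[p]) ^ k • fdiv p k g = 0 := by
      rw [fdiv_eq, qmapM_smul, hcast]
      rw [show (p : ℚ_[p]) ^ k * (((g.val : ℕ) : ℚ_[p]) / (p : ℚ_[p]) ^ k)
        = (((g.val : ℤ_[p])) : ℚ_[p]) from by push_cast; field_simp]
      exact qmapM_coe p _
    have h2 : (p : ℤ_[p]) ^ k •
        qmapM p (∑ j, ((α (Pi.single j 1)).val : ℚ_[p]) * t j / (p : ℚ_[p]) ^ k)
        = qmapM p (∑ j, ((α (Pi.single j 1)).val : ℚ_[p]) * t j) := by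
      rw [qmapM_smul, hcast, Finset.mul_sum]
      congr 1
      exact Finset.sum_congr rfl fun j _ => by field_simp
    rw [h1, h2, zero_add]
    have h3 : ∀ j, ((α (Pi.single j 1)).val : ℤ_[p]) • cM p α (mkT p α (g, t)) j
        = qmapM p (((α (Pi.single j 1)).val : ℚ_[p]) * t j) := by
      intro j
      have : cM p α (mkT p α (g, t)) j = qmapM p (t j) := rfl
      rw [this, qmapM_smul]
      push_cast
      rfl
    rw [Finset.sum_congr rfl fun j _ => h3 j, ← map_sum]
  · have hker : ∀ w : TA p α, (∀ j, cM p α w j = 0) → x w = 0 → w = 0 := by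
      intro w hc hxw
      obtain ⟨⟨g, t⟩, rfl⟩ := QuotientAddGroup.mk'_surjective (pushSub p α) w
      have ht : ∀ j, ∃ z : ℤ_[p], (z : ℚ_[p]) = t j := by
        intro j
        exact (Submodule.Quotient.mk_eq_zero _).mp (hc j)
      choose z hz using ht
      have htz : t = incl p h z := by
        funext j
        exact (hz j).symm
      have hrel : QuotientAddGroup.mk' (pushSub p α) (g, t) = mkT p α (g + α z, 0) := by
        have h5 := mkT_rel p α g 0 z
        rw [zero_add, ← htz] at h5
        exact h5
      rw [hrel] at hxw ⊢
      rw [hx] at hxw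
      rw [show (∑ j, ((α (Pi.single j 1)).val : ℚ_[p]) * (0 : Fin h → ℚ_[p]) j /
          (p : ℚ_[p]) ^ k) = 0 from Finset.sum_eq_zero fun j _ => by simp] at hxw
      rw [map_zero, add_zero] at hxw
      have hg0 : g + α z = 0 := fdiv_eq_zero p k _ hxw
      rw [hg0]
      exact map_zero (mkT p α)
    intro u v huv
    have h1 : ∀ j, cM p α (u - v) j = 0 := by
      intro j
      have h6 : cM p α u j = cM p α v j := congrArg (fun q => q.1 j) huv
      rw [map_sub]
      show cM p α u j - cM p α v j = 0
      rw [h6, sub_self]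
    have h2 : x (u - v) = 0 := by
      have h7 : x u = x v := congrArg Prod.snd huv
      rw [map_sub, h7, sub_self]
    exact sub_eq_zero.mp (hker (u - v) h1 h2)

end TwistedChar
end
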